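/- arXiv:1707.06924 — 4 statements merged into one kernel-verified Lean document; each statement's English description precedes it below -/
import Mathlib

section
/- Let 𝒰 be a one-dimensional update family for which -1 is a stable direction, r its range, a_n = r(2^n - 1), b_n = r·n·2^(n-1), and P_n = {-a_n,...,b_n}. For every n ∈ ℕ, for every Λ ⊂ ℤ with P_n ⊂ Λ, every η ∈ V(n,Λ) satisfies η_0 = 1. In other words, with at most n simultaneous zeroes, it is impossible to put a zero at the origin starting from all ones in Λ. -/
open Classical in
/-- A configuration on `Λ ⊆ ℤ` extended by zeroes (`false`) outside `Λ`. -/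
noncomputable def extCfg1 (Λ : Set ℤ) (η : ℤ → Bool) (s : ℤ) : Bool :=
  if s ∈ Λ then η s else false

/-- A one-dimensional update family: finite nonempty subsets of `ℤ \ {0}`. -/
def isUpdateFamily1 (U : Finset (Finset ℤ)) : Prop :=
  ∀ X ∈ U, X.Nonempty ∧ (0 : ℤ) ∉ X

/-- A legal move in dimension 1. -/
def legalMove1 (U : Finset (Finset ℤ)) (Λ : Set ℤ) (η η' : ℤ → Bool) : Prop :=
  (∀ s ∈ Λ, η' s = η s) ∨
  ∃ z ∈ Λ, η' z = !(η z) ∧ (∀ s ∈ Λ, s ≠ z → η' s = η s) ∧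
    ∃ X ∈ U, ∀ x ∈ X, extCfg1 Λ η (z + x) = false

/-- An `n`-legal path in dimension 1. -/
def nLegalPath1 (U : Finset (Finset ℤ)) (Λ : Set ℤ) (n : ℕ) (η η' : ℤ → Bool) : Prop :=
  ∃ (m : ℕ) (p : ℕ → ℤ → Bool),
    (∀ s ∈ Λ, p 0 s = η s) ∧ (∀ s ∈ Λ, p m s = η' s) ∧
    (∀ j < m, legalMove1 U Λ (p j) (p (j + 1))) ∧
    (∀ j ≤ m, {s ∈ Λ | p j s = false}.encard ≤ (n : ℕ∞))

/-- `V1 n Λ`: configurations reachable from all-ones by an `n`-legal path. -/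
def V1 (U : Finset (Finset ℤ)) (n : ℕ) (Λ : Set ℤ) : Set (ℤ → Bool) :=
  {η | nLegalPath1 U Λ n (fun _ => true) η}

/-- The range of the interactions: `max {‖x − y‖∞ : x, y ∈ X ∪ {0}, X ∈ U}`. -/
def range1 (U : Finset (Finset ℤ)) : ℕ :=
  U.sup (fun X => ((insert (0:ℤ) X) ×ˢ (insert (0:ℤ) X)).sup (fun p => (p.1 - p.2).natAbs))

/-- `a n = r (2^n − 1)`. -/
def aseq (r n : ℕ) : ℤ := (r : ℤ) * (2 ^ n - 1)

/-- `b n = r n 2^(n−1)`. -/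
def bseq (r n : ℕ) : ℤ := (r : ℤ) * n * 2 ^ (n - 1)

/-- `P n = {-a n, ..., b n}`. -/
def Pn (r n : ℕ) : Set ℤ := Set.Icc (-(aseq r n)) (bseq r n)

namespace Stmt6Aux

/-- The key invariant: every zero (`pebble`) of the configuration has a "support"
strictly to its left, within distance `r * 2^(ν x)`, which is either a hole of `Λ`
(a site outside `Λ`, which is frozen at zero) or another pebble of strictly larger
exponent.  The exponents `ν` are distinct and `< N`.  Following the chain of
supports, which has strictly increasing exponents, shows every pebble is within
distance `r * (2^N - 1)` of a hole of `Λ`. -/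
def Valid (r N : ℕ) (Λ S : Set ℤ) : Prop :=
  ∃ (ν : ℤ → ℕ) (sp : ℤ → ℤ),
    (∀ x ∈ S, ν x < N) ∧
    (∀ x ∈ S, ∀ y ∈ S, ν x = ν y → x = y) ∧
    (∀ x ∈ S, sp x < x ∧ x - sp x ≤ (r : ℤ) * 2 ^ (ν x) ∧
      (sp x ∉ Λ ∨ (sp x ∈ S ∧ ν x < ν (sp x))))

lemma valid_empty (r N : ℕ) (Λ : Set ℤ) : Valid r N Λ ∅ := by
  refine ⟨fun _ => 0, fun x => x - 1, ?_, ?_, ?_⟩ <;> intro x hx <;> simp at hx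

lemma two_pow_le {a b : ℕ} (h : a ≤ b) : (2:ℤ)^a ≤ 2^b :=
  pow_le_pow_right₀ (by norm_num) h

lemma one_le_two_pow {a : ℕ} : (1:ℤ) ≤ 2^a := one_le_pow₀ (by norm_num)

lemma two_pow_add_le {a b : ℕ} (h : a < b) : (2:ℤ)^a + 2^a ≤ 2^b := by
  have : (2:ℤ)^a + 2^a = 2^(a+1) := by ring
  rw [this]; exact two_pow_le h

/-- The climbing lemma: starting from a pebble `e` with small exponent `ν e < γ`,
follow the support chain until we meet either a hole of `Λ` or a pebble of exponent
`> γ`.  The total distance travelled is controlled; moreover if some exponent `νex`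
is known to be absent from all pebbles `≤ e`, an extra credit `2^νex` is gained. -/
lemma climb (r N : ℕ) (Λ S : Set ℤ) (ν : ℤ → ℕ) (sp : ℤ → ℤ)
    (hsup : ∀ x ∈ S, sp x < x ∧ x - sp x ≤ (r : ℤ) * 2 ^ (ν x) ∧
      (sp x ∉ Λ ∨ (sp x ∈ S ∧ ν x < ν (sp x))))
    (hlt : ∀ x ∈ S, ν x < N) (γ νex : ℕ) :
    ∀ (fuel : ℕ) (e : ℤ), e ∈ S → N - ν e ≤ fuel → ν e < γ →
      (∀ w ∈ S, w ≤ e → ν w ≠ γ) →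
      (∀ w ∈ S, w ≤ e → ν w ≠ νex) →
      ∃ z, z < e ∧ (z ∉ Λ ∨ (z ∈ S ∧ γ < ν z)) ∧
        e - z ≤ (r:ℤ) * 2 ^ γ - (r:ℤ) * 2 ^ (ν e) -
          (if ν e < νex ∧ νex < γ then (r:ℤ) * 2 ^ νex else 0) := by
  intro fuel
  induction fuel with
  | zero =>
    intro e he hfuel hγ _ _
    exact absurd hfuel (by have := hlt e he; omega)
  | succ fuel ih =>
    intro e he hfuel heγ hγe hex
    obtain ⟨h1, h2, h3⟩ := hsup e he
    -- common arithmetic: the "stop" bound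
    have hstop : (r:ℤ) * 2 ^ (ν e) ≤ (r:ℤ) * 2 ^ γ - (r:ℤ) * 2 ^ (ν e) -
        (if ν e < νex ∧ νex < γ then (r:ℤ) * 2 ^ νex else 0) := by
      have hr : (0:ℤ) ≤ (r:ℤ) := Int.ofNat_nonneg r
      by_cases hc : ν e < νex ∧ νex < γ
      · rw [if_pos hc]
        have e1 : (2:ℤ)^(ν e) + 2^(ν e) ≤ 2^νex := two_pow_add_le hc.1
        have e2 : (2:ℤ)^νex + 2^νex ≤ 2^γ := two_pow_add_le hc.2
        nlinarith [two_pow_le (le_refl (ν e))]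
      · rw [if_neg hc]
        have e1 : (2:ℤ)^(ν e) + 2^(ν e) ≤ 2^γ := two_pow_add_le heγ
        nlinarith
    rcases h3 with hfree | ⟨hspS, hspν⟩
    · exact ⟨sp e, h1, Or.inl hfree, le_trans h2 hstop⟩
    · have hne : ν (sp e) ≠ γ := hγe _ hspS (le_of_lt h1)
      rcases lt_or_gt_of_ne hne with hlt2 | hgt
      · -- recurse
        have hfuel' : N - ν (sp e) ≤ fuel := by
          have := hlt e he; omega
        obtain ⟨z, hz1, hz2, hz3⟩ := ih (sp e) hspS hfuel' hlt2
          (fun w hw hwe => hγe w hw (le_trans hwe (le_of_lt h1)))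
          (fun w hw hwe => hex w hw (le_trans hwe (le_of_lt h1)))
        refine ⟨z, lt_trans hz1 h1, hz2, ?_⟩
        have key : (r:ℤ) * 2 ^ (ν e) + (r:ℤ) * 2 ^ (ν e) +
            (if ν e < νex ∧ νex < γ then (r:ℤ) * 2 ^ νex else 0) ≤
            (r:ℤ) * 2 ^ (ν (sp e)) +
            (if ν (sp e) < νex ∧ νex < γ then (r:ℤ) * 2 ^ νex else 0) := by
          have hr : (0:ℤ) ≤ (r:ℤ) := Int.ofNat_nonneg r
          have hnex : ν (sp e) ≠ νex := hex _ hspS (le_of_lt h1)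
          by_cases hc1 : ν e < νex ∧ νex < γ
          · by_cases hc2 : ν (sp e) < νex ∧ νex < γ
            · rw [if_pos hc1, if_pos hc2]
              have e1 : (2:ℤ)^(ν e) + 2^(ν e) ≤ 2^(ν (sp e)) := two_pow_add_le hspν
              nlinarith
            · rw [if_pos hc1, if_neg hc2]
              -- then νex ≤ ν (sp e), and νex ≠ ν (sp e), so νex < ν (sp e)
              have hxlt : νex < ν (sp e) := by
                have h5 : ¬ (ν (sp e) < νex) := fun hh => hc2 ⟨hh, hc1.2⟩
                omega
              have e1 : (2:ℤ)^(ν e) + 2^(ν e) ≤ 2^νex := two_pow_add_le hc1.1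
              have e2 : (2:ℤ)^νex + 2^νex ≤ 2^(ν (sp e)) := two_pow_add_le hxlt
              nlinarith
          · rw [if_neg hc1]
            have e1 : (2:ℤ)^(ν e) + 2^(ν e) ≤ 2^(ν (sp e)) := two_pow_add_le hspν
            by_cases hc2 : ν (sp e) < νex ∧ νex < γ
            · rw [if_pos hc2]
              nlinarith [two_pow_le (le_refl νex), one_le_two_pow (a := νex), hr]
            · rw [if_neg hc2]; nlinarith
        have : e - z = (e - sp e) + (sp e - z) := by ring
        rw [this]
        have := add_le_add h2 hz3
        linarith
      · exact ⟨sp e, h1, Or.inr ⟨hspS, hgt⟩, le_trans h2 hstop⟩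

/-- Creation: a pebble may be added at `z` provided it has an "enabler" `e` (a hole
or a pebble) within distance `r` to its left, and the budget `N` is respected. -/
lemma valid_insert (r N : ℕ) (Λ S : Set ℤ)
    (hv : Valid r N Λ S) (z e : ℤ) (hz : z ∉ S)
    (hcard : (insert z S).encard ≤ (N : ℕ∞))
    (he1 : e < z) (he2 : z - e ≤ (r:ℤ)) (he3 : e ∉ Λ ∨ e ∈ S) :
    Valid r N Λ (insert z S) := by
  classical
  obtain ⟨ν, sp, hlt, hinj, hsup⟩ := hv
  -- find an unused exponent γ < N
  obtain ⟨hfin', -⟩ := Set.encard_le_coe_iff_finite_ncard_le.mp hcard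
  have hSfin : S.Finite := hfin'.subset (Set.subset_insert _ _)
  have hScard : hSfin.toFinset.card < N := by
    have h1 : (insert z S).encard = S.encard + 1 := Set.encard_insert_of_notMem hz
    have h2 : S.encard = (hSfin.toFinset.card : ℕ∞) :=
      Set.Finite.encard_eq_coe_toFinset_card hSfin
    rw [h1, h2] at hcard
    have h3 : ((hSfin.toFinset.card + 1 : ℕ) : ℕ∞) ≤ (N : ℕ∞) := by
      push_cast
      exact hcard
    have h4 := Nat.cast_le.mp h3
    omega
  obtain ⟨γ, hγR, hγF⟩ : ∃ γ ∈ Finset.range N, γ ∉ hSfin.toFinset.image ν := by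
    by_contra hc
    push_neg at hc
    have hsub : Finset.range N ⊆ hSfin.toFinset.image ν := hc
    have h1 : (Finset.range N).card ≤ (hSfin.toFinset.image ν).card :=
      Finset.card_le_card hsub
    have h2 : (hSfin.toFinset.image ν).card ≤ hSfin.toFinset.card :=
      Finset.card_image_le
    simp only [Finset.card_range] at h1
    omega
  have hγN : γ < N := Finset.mem_range.mp hγR
  have hγunused : ∀ w ∈ S, ν w ≠ γ := by
    intro w hw hcon
    exact hγF (Finset.mem_image.mpr ⟨w, hSfin.mem_toFinset.mpr hw, hcon⟩)
  -- find the support for z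
  have hgoodsp : ∃ w, w < z ∧ (w ∉ Λ ∨ (w ∈ S ∧ γ < ν w)) ∧
      z - w ≤ (r:ℤ) * 2 ^ γ := by
    have hrpow : (r:ℤ) ≤ (r:ℤ) * 2 ^ γ := by
      nlinarith [one_le_two_pow (a := γ), Int.ofNat_nonneg r]
    rcases he3 with hfree | heS
    · exact ⟨e, he1, Or.inl hfree, le_trans he2 hrpow⟩
    · rcases lt_or_gt_of_ne (hγunused e heS) with h | h
      · -- climb from e
        obtain ⟨w, hw1, hw2, hw3⟩ := climb r N Λ S ν sp hsup hlt γ N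
          (N - ν e) e heS le_rfl h
          (fun w hw _ => hγunused w hw)
          (fun w hw _ => Nat.ne_of_lt (hlt w hw))
        refine ⟨w, lt_trans hw1 he1, hw2, ?_⟩
        have hif : (if ν e < N ∧ N < γ then (r:ℤ) * 2 ^ N else 0) = 0 := by
          rw [if_neg]; rintro ⟨_, hcon⟩; omega
        rw [hif] at hw3
        have h1 : (r:ℤ) ≤ (r:ℤ) * 2 ^ (ν e) := by
          nlinarith [one_le_two_pow (a := ν e), Int.ofNat_nonneg r]
        have : z - w = (z - e) + (e - w) := by ring
        rw [this]; linarith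
      · exact ⟨e, he1, Or.inr ⟨heS, h⟩, le_trans he2 hrpow⟩
  obtain ⟨w, hw1, hw2, hw3⟩ := hgoodsp
  set ν2 : ℤ → ℕ := fun x => if x = z then γ else ν x with hν2
  set sp2 : ℤ → ℤ := fun x => if x = z then w else sp x with hsp2
  have hν2z : ν2 z = γ := by simp only [hν2, if_pos rfl]
  have hν2o : ∀ x, x ≠ z → ν2 x = ν x := fun x hx => by simp only [hν2, if_neg hx]
  have hsp2z : sp2 z = w := by simp only [hsp2, if_pos rfl]
  have hsp2o : ∀ x, x ≠ z → sp2 x = sp x := fun x hx => by simp only [hsp2, if_neg hx]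
  have hmemne : ∀ x, x ∈ S → x ≠ z := fun x hx h => hz (h ▸ hx)
  refine ⟨ν2, sp2, ?_, ?_, ?_⟩
  · intro x hx
    rcases Set.mem_insert_iff.mp hx with hxz | hxS
    · rw [hxz, hν2z]; exact hγN
    · rw [hν2o x (hmemne x hxS)]; exact hlt x hxS
  · intro x hx y hy heq
    rcases Set.mem_insert_iff.mp hx with hxz | hxS <;>
      rcases Set.mem_insert_iff.mp hy with hyz | hyS
    · rw [hxz, hyz]
    · rw [hxz, hν2z, hν2o y (hmemne y hyS)] at heq
      exact absurd heq.symm (hγunused y hyS)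
    · rw [hyz, hν2z, hν2o x (hmemne x hxS)] at heq
      exact absurd heq (hγunused x hxS)
    · rw [hν2o x (hmemne x hxS), hν2o y (hmemne y hyS)] at heq
      exact hinj x hxS y hyS heq
  · intro x hx
    rcases Set.mem_insert_iff.mp hx with hxz | hxS
    · subst hxz
      rw [hsp2z, hν2z]
      refine ⟨hw1, hw3, ?_⟩
      rcases hw2 with h | ⟨hwS, hwγ⟩
      · exact Or.inl h
      · refine Or.inr ⟨Set.mem_insert_of_mem _ hwS, ?_⟩
        rw [hν2o w (hmemne w hwS)]
        exact hwγ
    · rw [hsp2o x (hmemne x hxS), hν2o x (hmemne x hxS)]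
      obtain ⟨h1, h2, h3⟩ := hsup x hxS
      refine ⟨h1, h2, ?_⟩
      rcases h3 with h | ⟨hspS, hspν⟩
      · exact Or.inl h
      · refine Or.inr ⟨Set.mem_insert_of_mem _ hspS, ?_⟩
        rw [hν2o (sp x) (hmemne (sp x) hspS)]
        exact hspν

/-- Removal: a pebble may always be removed, provided it has an enabler within
distance `r` to its left (which is what legality of the move provides). -/
lemma valid_remove (r N : ℕ) (Λ S : Set ℤ)
    (hv : Valid r N Λ S) (s e : ℤ) (hs : s ∈ S)
    (he1 : e < s) (he2 : s - e ≤ (r:ℤ)) (he3 : e ∉ Λ ∨ (e ∈ S ∧ e ≠ s)) :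
    Valid r N Λ (S \ {s}) := by
  classical
  obtain ⟨ν, sp, hlt, hinj, hsup⟩ := hv
  -- the dependents of s
  set D : ℤ → Prop := fun x => x ∈ S ∧ x ≠ s ∧ sp x = s ∧ s ∈ Λ with hD
  have hDprop : ∀ x, D x → s < x ∧ x - s ≤ (r:ℤ) * 2 ^ (ν x) ∧ ν x < ν s := by
    intro x ⟨hxS, hxs, hspx, hsΛ⟩
    obtain ⟨h1, h2, h3⟩ := hsup x hxS
    rw [hspx] at h1 h2 h3
    rcases h3 with h | ⟨_, h⟩
    · exact absurd hsΛ h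
    · exact ⟨h1, h2, h⟩
  -- new exponents for dependents
  set C : ℤ → Set ℕ := fun x => {v | (v = ν s ∨ ∃ y, D y ∧ ν y = v) ∧ ν x < v} with hC
  have hCne : ∀ x, D x → (C x).Nonempty := fun x hx => ⟨ν s, Or.inl rfl, (hDprop x hx).2.2⟩
  set ν' : ℤ → ℕ := fun x => if D x then sInf (C x) else ν x with hν'
  have hν'mem : ∀ x, D x → (sInf (C x) = ν s ∨ ∃ y, D y ∧ ν y = sInf (C x)) ∧
      ν x < sInf (C x) := fun x hx => Nat.sInf_mem (hCne x hx)
  have hν'lt : ∀ x, D x → sInf (C x) < N := by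
    intro x hx
    rcases (hν'mem x hx).1 with h | ⟨y, hy, hyv⟩
    · rw [h]; exact hlt s hs
    · rw [← hyv]; exact hlt y hy.1
  have hν'gt : ∀ x, D x → ν x < sInf (C x) := fun x hx => (hν'mem x hx).2
  -- small positions are not dependents
  have hsmall : ∀ w, w < s → ¬ D w := by
    rintro w hw ⟨hwS, _, hsp, _⟩
    obtain ⟨h1, _, _⟩ := hsup w hwS
    rw [hsp] at h1
    omega
  -- injectivity of ν' on S \ {s}
  have hinj' : ∀ x, x ∈ S → x ≠ s → ∀ y, y ∈ S → y ≠ s → ν' x = ν' y → x = y := by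
    intro x hxS hxs y hyS hys heq
    by_cases hDx : D x <;> by_cases hDy : D y
    · -- both dependents
      by_contra hne
      rcases Nat.lt_or_ge (ν x) (ν y) with hlt2 | hge
      · have h1 : ν y ∈ C x := ⟨Or.inr ⟨y, hDy, rfl⟩, hlt2⟩
        have h2 : sInf (C x) ≤ ν y := Nat.sInf_le h1
        have h3 : ν y < sInf (C y) := hν'gt y hDy
        simp only [hν', if_pos hDx, if_pos hDy] at heq
        omega
      · have hlt2 : ν y < ν x := by
          rcases Nat.lt_or_ge (ν y) (ν x) with h | h
          · exact h
          · exact absurd (hinj x hxS y hyS (le_antisymm h hge)) hne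
        have h1 : ν x ∈ C y := ⟨Or.inr ⟨x, hDx, rfl⟩, hlt2⟩
        have h2 : sInf (C y) ≤ ν x := Nat.sInf_le h1
        have h3 : ν x < sInf (C x) := hν'gt x hDx
        simp only [hν', if_pos hDx, if_pos hDy] at heq
        omega
    · -- x dependent, y not
      exfalso
      simp only [hν', if_pos hDx, if_neg hDy] at heq
      rcases (hν'mem x hDx).1 with h | ⟨y', hy', hyv⟩
      · rw [heq] at h
        exact hys (hinj y hyS s hs h)
      · rw [heq] at hyv
        have := hinj y' hy'.1 y hyS hyv
        exact hDy (this ▸ hy')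
    · -- y dependent, x not
      exfalso
      simp only [hν', if_neg hDx, if_pos hDy] at heq
      rcases (hν'mem y hDy).1 with h | ⟨x', hx', hxv⟩
      · rw [← heq] at h
        exact hxs (hinj x hxS s hs h)
      · rw [← heq] at hxv
        have := hinj x' hx'.1 x hxS hxv
        exact hDx (this ▸ hx')
    · simp only [hν', if_neg hDx, if_neg hDy] at heq
      exact hinj x hxS y hyS heq
  -- re-support the dependents
  have hre : ∀ x, D x → ∃ w, w < s ∧ (w ∉ Λ ∨ (w ∈ S ∧ ν' x < ν w)) ∧
      x - w ≤ (r:ℤ) * 2 ^ (ν' x) := by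
    intro x hDx
    obtain ⟨hsx, hxd, hxνs⟩ := hDprop x hDx
    have hg : ν' x = sInf (C x) := by simp only [hν', if_pos hDx]
    have hgx : ν x < ν' x := by rw [hg]; exact hν'gt x hDx
    have hr : (0:ℤ) ≤ (r:ℤ) := Int.ofNat_nonneg r
    have hr2 : (r:ℤ) ≤ (r:ℤ) * 2 ^ (ν x) := by
      nlinarith [one_le_two_pow (a := ν x)]
    have hbase : x - e ≤ (r:ℤ) * 2 ^ (ν x) + (r:ℤ) := by
      have : x - e = (x - s) + (s - e) := by ring
      rw [this]; exact add_le_add hxd he2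
    have hdouble : (r:ℤ) * 2 ^ (ν x) + (r:ℤ) ≤ (r:ℤ) * 2 ^ (ν' x) := by
      have h1 : (2:ℤ)^(ν x) + 2^(ν x) ≤ 2^(ν' x) := two_pow_add_le hgx
      nlinarith [one_le_two_pow (a := ν x)]
    -- the new exponent is never the exponent of a pebble left of s
    have hν'ne : ∀ w, w ∈ S → w < s → ν w ≠ ν' x := by
      intro w hwS hws hcon
      rw [hg] at hcon
      rcases (hν'mem x hDx).1 with h | ⟨y, hy, hyv⟩
      · rw [← hcon] at h
        have := hinj w hwS s hs h
        omega
      · rw [← hcon] at hyv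
        have := hinj y hy.1 w hwS hyv
        have hsy := (hDprop y hy).1
        omega
    rcases he3 with hfree | ⟨heS, _⟩
    · exact ⟨e, he1, Or.inl hfree, le_trans hbase hdouble⟩
    · have hene : ν e ≠ ν' x := hν'ne e heS he1
      rcases lt_or_gt_of_ne hene with h | h
      · -- climb from e with exclusion exponent ν x
        obtain ⟨w, hw1, hw2, hw3⟩ := climb r N Λ S ν sp hsup hlt (ν' x) (ν x)
          (N - ν e) e heS le_rfl h
          (fun w hw hwe => hν'ne w hw (lt_of_le_of_lt hwe he1))
          (fun w hw hwe => by
            intro hcon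
            have := hinj w hw x hDx.1 hcon
            omega)
        refine ⟨w, lt_trans hw1 he1, ?_, ?_⟩
        · rcases hw2 with hh | ⟨hwS, hwγ⟩
          · exact Or.inl hh
          · exact Or.inr ⟨hwS, hwγ⟩
        · have hxw : x - w = (x - s) + (s - e) + (e - w) := by ring
          rw [hxw]
          have hνe1 : (r:ℤ) ≤ (r:ℤ) * 2 ^ (ν e) := by
            nlinarith [one_le_two_pow (a := ν e)]
          by_cases hc : ν e < ν x ∧ ν x < ν' x
          · rw [if_pos hc] at hw3
            linarith
          · rw [if_neg hc] at hw3
            -- then ν x < ν e (since ν x ≠ ν e and ν x < ν' x always)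
            have hxe : ν x < ν e := by
              have h1 : ν x ≠ ν e := by
                intro hcon
                have := hinj x hDx.1 e heS hcon
                omega
              have h5 : ¬ (ν e < ν x) := fun hh => hc ⟨hh, hgx⟩
              omega
            have h2 : (2:ℤ)^(ν x) + 2^(ν x) ≤ 2^(ν e) := two_pow_add_le hxe
            nlinarith [one_le_two_pow (a := ν x)]
      · exact ⟨e, he1, Or.inr ⟨heS, h⟩, le_trans hbase hdouble⟩
  -- assemble
  set sp' : ℤ → ℤ := fun x => if h : D x then Classical.choose (hre x h) else sp x
    with hsp'
  refine ⟨ν', sp', ?_, ?_, ?_⟩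
  · intro x hx
    obtain ⟨hxS, hxs⟩ := hx
    by_cases hDx : D x
    · simp only [hν', if_pos hDx]; exact hν'lt x hDx
    · simp only [hν', if_neg hDx]; exact hlt x hxS
  · intro x hx y hy
    exact hinj' x hx.1 hx.2 y hy.1 hy.2
  · intro x hx
    obtain ⟨hxS, hxs⟩ := hx
    have hxs' : x ≠ s := hxs
    by_cases hDx : D x
    · obtain ⟨hw1, hw2, hw3⟩ := Classical.choose_spec (hre x hDx)
      have hspx : sp' x = Classical.choose (hre x hDx) := by
        simp only [hsp', dif_pos hDx]
      rw [hspx]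
      have hsx := (hDprop x hDx).1
      refine ⟨lt_trans hw1 hsx, hw3, ?_⟩
      rcases hw2 with h | ⟨hwS, hwγ⟩
      · exact Or.inl h
      · refine Or.inr ⟨⟨hwS, by intro hc; rw [hc] at hw1; omega⟩, ?_⟩
        have hnDw : ¬ D (Classical.choose (hre x hDx)) := hsmall _ hw1
        show ν' x < ν' (Classical.choose (hre x hDx))
        have e2 : ν' (Classical.choose (hre x hDx)) = ν (Classical.choose (hre x hDx)) := by
          simp only [hν', if_neg hnDw]
        rw [e2]
        exact hwγ
    · have hspx : sp' x = sp x := by simp only [hsp', dif_neg hDx]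
      rw [hspx]
      obtain ⟨h1, h2, h3⟩ := hsup x hxS
      have hν'x : ν' x = ν x := by simp only [hν', if_neg hDx]
      rw [hν'x]
      refine ⟨h1, h2, ?_⟩
      rcases h3 with h | ⟨hspS, hspν⟩
      · exact Or.inl h
      · by_cases hsps : sp x = s
        · -- since x is not a dependent, s ∉ Λ
          left
          intro hsΛ
          exact hDx ⟨hxS, hxs', hsps, hsps ▸ hsΛ⟩
        · refine Or.inr ⟨⟨hspS, hsps⟩, ?_⟩
          by_cases hDsp : D (sp x)
          · simp only [hν', if_pos hDsp]
            exact lt_trans hspν (hν'gt _ hDsp)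
          · simp only [hν', if_neg hDsp]
            exact hspν

/-- Every pebble of a valid configuration is within `r * (2^N - 1)` of a hole. -/
lemma valid_depth (r N : ℕ) (Λ S : Set ℤ) (hv : Valid r N Λ S) :
    ∀ x ∈ S, ∃ f, f ∉ Λ ∧ f < x ∧ x - f ≤ (r:ℤ) * (2 ^ N - 1) := by
  obtain ⟨ν, sp, hlt, hinj, hsup⟩ := hv
  have main : ∀ (fuel : ℕ) (x : ℤ), x ∈ S → N - ν x ≤ fuel →
      ∃ f, f ∉ Λ ∧ f < x ∧ x - f ≤ (r:ℤ) * (2 ^ N - 2 ^ (ν x)) := by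
    intro fuel
    induction fuel with
    | zero =>
      intro x hx hfuel
      exact absurd hfuel (by have := hlt x hx; omega)
    | succ fuel ih =>
      intro x hx hfuel
      obtain ⟨h1, h2, h3⟩ := hsup x hx
      have hr : (0:ℤ) ≤ (r:ℤ) := Int.ofNat_nonneg r
      rcases h3 with hfree | ⟨hspS, hspν⟩
      · refine ⟨sp x, hfree, h1, ?_⟩
        have e1 : (2:ℤ)^(ν x) + 2^(ν x) ≤ 2^N := two_pow_add_le (hlt x hx)
        nlinarith
      · have hfuel' : N - ν (sp x) ≤ fuel := by have := hlt x hx; omega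
        obtain ⟨f, hf1, hf2, hf3⟩ := ih (sp x) hspS hfuel'
        refine ⟨f, hf1, lt_trans hf2 h1, ?_⟩
        have : x - f = (x - sp x) + (sp x - f) := by ring
        rw [this]
        have e1 : (2:ℤ)^(ν x) + 2^(ν x) ≤ 2^(ν (sp x)) := two_pow_add_le hspν
        nlinarith
  intro x hx
  obtain ⟨f, hf1, hf2, hf3⟩ := main (N - ν x) x hx le_rfl
  refine ⟨f, hf1, hf2, ?_⟩
  have : (r:ℤ) * (2 ^ N - 2 ^ (ν x)) ≤ (r:ℤ) * (2 ^ N - 1) := by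
    have := one_le_two_pow (a := ν x)
    have hr : (0:ℤ) ≤ (r:ℤ) := Int.ofNat_nonneg r
    nlinarith
  linarith

end Stmt6Aux

/-- Main theorem in dimension 1: if `-1` is a stable direction for `U`, then for every
`n` and every `Λ ⊇ P n`, every configuration reachable from all-ones using at most `n`
simultaneous zeroes has a one at the origin. -/
theorem stmt6 (U : Finset (Finset ℤ)) (hU : isUpdateFamily1 U)
    (hstable : ∀ X ∈ U, ¬ (∀ x ∈ X, 0 < x)) :
    ∀ n : ℕ, ∀ Λ : Set ℤ, Pn (range1 U) n ⊆ Λ →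
      ∀ η ∈ V1 U n Λ, η 0 = true := by
  classical
  intro n Λ hΛ η hη
  obtain ⟨m, p, h0, hm, hleg, hbud⟩ := hη
  set r := range1 U with hr
  -- the invariant propagates along the path
  have key : ∀ j, j ≤ m → Stmt6Aux.Valid r n Λ {s | s ∈ Λ ∧ p j s = false} := by
    intro j
    induction j with
    | zero =>
      intro _
      have hempty : {s | s ∈ Λ ∧ p 0 s = false} = (∅ : Set ℤ) := by
        ext s
        simp only [Set.mem_setOf_eq, Set.mem_empty_iff_false, iff_false, not_and]
        intro hs
        rw [h0 s hs]
        simp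
      rw [hempty]
      exact Stmt6Aux.valid_empty r n Λ
    | succ j ih =>
      intro hj
      have hj' : j ≤ m := by omega
      have hvj := ih hj'
      rcases hleg j (by omega) with hid | ⟨z, hzΛ, hflip, hoth, X, hX, hXzero⟩
      · -- no-op move
        have heq : {s | s ∈ Λ ∧ p (j+1) s = false} = {s | s ∈ Λ ∧ p j s = false} := by
          ext s
          simp only [Set.mem_setOf_eq, and_congr_right_iff]
          intro hs
          rw [hid s hs]
        rw [heq]
        exact hvj
      · -- flip at z; find the enabler
        obtain ⟨x0, hx0X, hx0le⟩ : ∃ x0 ∈ X, x0 ≤ 0 := by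
          have := hstable X hX
          push_neg at this
          obtain ⟨x0, hx0, hle⟩ := this
          exact ⟨x0, hx0, hle⟩
        have hx0ne : x0 ≠ 0 := fun h => (hU X hX).2 (h ▸ hx0X)
        have hx0neg : x0 < 0 := lt_of_le_of_ne hx0le hx0ne
        -- |x0| ≤ r
        have hx0r : x0.natAbs ≤ r := by
          have h1 : ((x0, (0:ℤ)) : ℤ × ℤ) ∈ (insert (0:ℤ) X) ×ˢ (insert (0:ℤ) X) := by
            rw [Finset.mem_product]
            exact ⟨Finset.mem_insert_of_mem hx0X, Finset.mem_insert_self _ _⟩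
          have h2 := Finset.le_sup (f := fun p : ℤ × ℤ => (p.1 - p.2).natAbs) h1
          have h3 := Finset.le_sup (s := U)
            (f := fun X => ((insert (0:ℤ) X) ×ˢ (insert (0:ℤ) X)).sup
              (fun p => (p.1 - p.2).natAbs)) hX
          rw [hr]
          unfold range1
          simp only at h2 h3
          have h4 : x0.natAbs = (x0 - 0).natAbs := by norm_num
          rw [h4]
          exact le_trans h2 h3
        set e := z + x0 with he
        have he1 : e < z := by omega
        have he2 : z - e ≤ (r:ℤ) := by
          have : z - e = -x0 := by omega
          rw [this]
          have : -x0 = (x0.natAbs : ℤ) := by omega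
          rw [this]
          exact_mod_cast hx0r
        have hezero := hXzero x0 hx0X
        rw [← he] at hezero
        have he3 : e ∉ Λ ∨ (e ∈ Λ ∧ p j e = false) := by
          by_cases heΛ : e ∈ Λ
          · right
            refine ⟨heΛ, ?_⟩
            unfold extCfg1 at hezero
            rwa [if_pos heΛ] at hezero
          · exact Or.inl heΛ
        cases hpz : p j z with
        | true =>
          -- creation of a pebble at z
          have heq : {s | s ∈ Λ ∧ p (j+1) s = false} =
              insert z {s | s ∈ Λ ∧ p j s = false} := by
            ext s
            simp only [Set.mem_setOf_eq, Set.mem_insert_iff]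
            constructor
            · rintro ⟨hsΛ, hsf⟩
              by_cases hsz : s = z
              · exact Or.inl hsz
              · exact Or.inr ⟨hsΛ, by rw [← hoth s hsΛ hsz]; exact hsf⟩
            · rintro (rfl | ⟨hsΛ, hsf⟩)
              · exact ⟨hzΛ, by rw [hflip, hpz]; rfl⟩
              · by_cases hsz : s = z
                · subst hsz
                  rw [hpz] at hsf
                  exact absurd hsf (by simp)
                · exact ⟨hsΛ, by rw [hoth s hsΛ hsz]; exact hsf⟩
          rw [heq]
          have hznot : z ∉ {s | s ∈ Λ ∧ p j s = false} := by
            rintro ⟨_, hc⟩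
            rw [hpz] at hc
            exact absurd hc (by simp)
          apply Stmt6Aux.valid_insert r n Λ _ hvj z e hznot
          · rw [← heq]
            exact hbud (j+1) hj
          · exact he1
          · exact he2
          · rcases he3 with h | ⟨h1, h2⟩
            · exact Or.inl h
            · exact Or.inr ⟨h1, h2⟩
        | false =>
          -- removal of the pebble at z
          have heq : {s | s ∈ Λ ∧ p (j+1) s = false} =
              {s | s ∈ Λ ∧ p j s = false} \ {z} := by
            ext s
            simp only [Set.mem_setOf_eq, Set.mem_diff, Set.mem_singleton_iff]
            constructor
            · rintro ⟨hsΛ, hsf⟩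
              by_cases hsz : s = z
              · subst hsz
                rw [hflip, hpz] at hsf
                exact absurd hsf (by simp)
              · exact ⟨⟨hsΛ, by rw [← hoth s hsΛ hsz]; exact hsf⟩, hsz⟩
            · rintro ⟨⟨hsΛ, hsf⟩, hsz⟩
              exact ⟨hsΛ, by rw [hoth s hsΛ hsz]; exact hsf⟩
          rw [heq]
          have hzS : z ∈ {s | s ∈ Λ ∧ p j s = false} := ⟨hzΛ, hpz⟩
          apply Stmt6Aux.valid_remove r n Λ _ hvj z e hzS he1 he2
          rcases he3 with h | ⟨h1, h2⟩
          · exact Or.inl h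
          · exact Or.inr ⟨⟨h1, h2⟩, by omega⟩
  -- conclude
  have ha0 : (0:ℤ) ≤ aseq r n := by
    unfold aseq
    have h1 : (1:ℤ) ≤ 2 ^ n := Stmt6Aux.one_le_two_pow
    have hr0 : (0:ℤ) ≤ (r:ℤ) := Int.ofNat_nonneg r
    nlinarith
  have hb0 : (0:ℤ) ≤ bseq r n := by
    unfold bseq
    positivity
  have h0Λ : (0:ℤ) ∈ Λ := hΛ ⟨by omega, hb0⟩
  by_contra hfalse
  have hfalse' : η 0 = false := by
    cases h : η 0
    · rfl
    · exact absurd h hfalse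
  have h0S : (0:ℤ) ∈ {s | s ∈ Λ ∧ p m s = false} :=
    ⟨h0Λ, by rw [hm 0 h0Λ]; exact hfalse'⟩
  obtain ⟨f, hfΛ, hf0, hfd⟩ :=
    Stmt6Aux.valid_depth r n Λ _ (key m le_rfl) 0 h0S
  apply hfΛ
  apply hΛ
  constructor
  · unfold aseq
    linarith [hfd]
  · linarith [hb0, hf0]
end

section
/- Key lemma in dimension 1: let 𝒰 be a one-dimensional update family with -1 a stable direction, r its range, a_n = r(2^n−1), b_n = r·n·2^(n−1), P_n = {-a_n,...,b_n}. Let n ≥ 1 and assume the induction hypothesis H_{n−1}: for every Λ ⊇ P_{n−1} and every η ∈ V(n−1,Λ), η_0 = 1. Then for every Λ ⊂ ℤ with P_n ⊂ Λ and every η ∈ V(n,Λ) with η ≠ 1_Λ, the configuration η has at least one zero in Λ \ P_{n−1}. -/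
/- ### Auxiliary lemmas -/

lemma extCfg1_pos {Λ : Set ℤ} {η : ℤ → Bool} {s : ℤ} (h : s ∈ Λ) :
    extCfg1 Λ η s = η s := by
  unfold extCfg1; exact if_pos h

lemma extCfg1_neg {Λ : Set ℤ} {η : ℤ → Bool} {s : ℤ} (h : s ∉ Λ) :
    extCfg1 Λ η s = false := by
  unfold extCfg1; exact if_neg h

lemma natAbs_sub_le_range1 {U : Finset (Finset ℤ)} {X : Finset ℤ} (hX : X ∈ U)
    {x x' : ℤ} (hx : x ∈ insert (0:ℤ) X) (hx' : x' ∈ insert (0:ℤ) X) :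
    (x - x').natAbs ≤ range1 U := by
  have h2 : (fun p : ℤ × ℤ => (p.1 - p.2).natAbs) (x, x') ≤
      ((insert (0:ℤ) X) ×ˢ (insert (0:ℤ) X)).sup (fun p : ℤ × ℤ => (p.1 - p.2).natAbs) :=
    Finset.le_sup (f := fun p : ℤ × ℤ => (p.1 - p.2).natAbs)
      (Finset.mem_product.2 ⟨hx, hx'⟩)
  have h1 : ((insert (0:ℤ) X) ×ˢ (insert (0:ℤ) X)).sup (fun p : ℤ × ℤ => (p.1 - p.2).natAbs)
      ≤ range1 U :=
    Finset.le_sup (f := fun X =>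
      ((insert (0:ℤ) X) ×ˢ (insert (0:ℤ) X)).sup (fun p : ℤ × ℤ => (p.1 - p.2).natAbs)) hX
  exact le_trans h2 h1

lemma natAbs_le_range1 {U : Finset (Finset ℤ)} {X : Finset ℤ} (hX : X ∈ U)
    {x : ℤ} (hx : x ∈ X) : x.natAbs ≤ range1 U := by
  have := natAbs_sub_le_range1 hX (Finset.mem_insert_of_mem hx) (Finset.mem_insert_self 0 X)
  simpa using this

lemma aseq_nonneg (r k : ℕ) : (0:ℤ) ≤ aseq r k := by
  have h2 : (0:ℤ) < 2 ^ k := pow_pos (by norm_num) k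
  have h3 : (0:ℤ) ≤ 2 ^ k - 1 := by omega
  exact mul_nonneg (by positivity) h3

lemma aseq_succ (r : ℕ) {n : ℕ} (hn : 1 ≤ n) :
    aseq r n = 2 * aseq r (n - 1) + r := by
  obtain ⟨k, rfl⟩ : ∃ k, n = k + 1 := ⟨n - 1, by omega⟩
  simp only [aseq, Nat.add_sub_cancel]
  rw [pow_succ]
  ring

lemma bseq_le_succ (r : ℕ) {n : ℕ} (hn : 1 ≤ n) :
    bseq r (n - 1) ≤ bseq r n := by
  obtain ⟨k, rfl⟩ : ∃ k, n = k + 1 := ⟨n - 1, by omega⟩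
  simp only [bseq, Nat.add_sub_cancel]
  have h1 : (2:ℤ) ^ (k - 1) ≤ 2 ^ k := pow_le_pow_right₀ (by norm_num) (by omega)
  have h3 : (0:ℤ) ≤ (r:ℤ) := by positivity
  have h4 : (0:ℤ) ≤ (k:ℤ) := by positivity
  have hstep : (r:ℤ) * (k:ℤ) * 2 ^ (k-1) ≤ (r:ℤ) * ((k:ℤ)+1) * 2 ^ k := by
    have e1 : (r:ℤ) * (k:ℤ) * 2 ^ (k-1) = ((r:ℤ)*(k:ℤ)) * 2 ^ (k-1) := by ring
    have e2 : (r:ℤ) * ((k:ℤ)+1) * 2 ^ k = ((r:ℤ)*(k:ℤ)) * 2 ^ k + (r:ℤ) * 2 ^ k := by ring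
    have h6 : ((r:ℤ)*(k:ℤ)) * 2 ^ (k-1) ≤ ((r:ℤ)*(k:ℤ)) * 2 ^ k :=
      mul_le_mul_of_nonneg_left h1 (mul_nonneg h3 h4)
    have h7 : (0:ℤ) ≤ (r:ℤ) * 2 ^ k := mul_nonneg h3 (by positivity)
    rw [e1, e2]; linarith
  push_cast
  exact hstep

lemma legalMove1_symm {U : Finset (Finset ℤ)} (hU : isUpdateFamily1 U)
    {Λ : Set ℤ} {A B : ℤ → Bool} (h : legalMove1 U Λ A B) : legalMove1 U Λ B A := by
  rcases h with h | ⟨z, hz, hflip, hpres, X, hXU, hXc⟩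
  · exact Or.inl fun s hs => (h s hs).symm
  · refine Or.inr ⟨z, hz, ?_, fun s hs hsz => (hpres s hs hsz).symm, X, hXU, ?_⟩
    · rw [hflip, Bool.not_not]
    · intro x hx
      have hx0 : x ≠ 0 := fun h0 => (hU X hXU).2 (h0 ▸ hx)
      have hne : z + x ≠ z := by omega
      have h1 := hXc x hx
      by_cases hm : z + x ∈ Λ
      · rw [extCfg1_pos hm] at h1 ⊢
        rw [hpres _ hm hne]
        exact h1
      · exact extCfg1_neg hm

lemma legalMove1_translate {U : Finset (Finset ℤ)} {Λ : Set ℤ} {A B : ℤ → Bool} (y : ℤ)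
    (h : legalMove1 U Λ A B) :
    legalMove1 U {s : ℤ | s + y ∈ Λ} (fun s => A (s + y)) (fun s => B (s + y)) := by
  rcases h with h | ⟨z, hz, hflip, hpres, X, hXU, hXc⟩
  · exact Or.inl fun s hs => h (s + y) hs
  · have e0 : z - y + y = z := by ring
    refine Or.inr ⟨z - y, ?_, ?_, ?_, X, hXU, ?_⟩
    · show z - y + y ∈ Λ
      rw [e0]; exact hz
    · show B (z - y + y) = !(A (z - y + y))
      rw [e0]; exact hflip
    · intro s hs hsz
      show B (s + y) = A (s + y)
      exact hpres (s + y) hs (fun hh => hsz (by omega))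
    · intro x hx
      have h1 := hXc x hx
      have e : (z - y + x) + y = z + x := by ring
      by_cases hm : z + x ∈ Λ
      · have hm' : (z - y + x) ∈ {s : ℤ | s + y ∈ Λ} := by
          show (z - y + x) + y ∈ Λ; rw [e]; exact hm
        rw [extCfg1_pos hm']
        show A ((z - y + x) + y) = false
        rw [e]
        rw [extCfg1_pos hm] at h1
        exact h1
      · have hm' : (z - y + x) ∉ {s : ℤ | s + y ∈ Λ} := fun hc => hm (by
          have : (z - y + x) + y ∈ Λ := hc
          rwa [e] at this)
        exact extCfg1_neg hm'

set_option maxHeartbeats 1000000 in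
/-- Key lemma in dimension 1: if `H (n−1)` holds, then for every `Λ ⊇ P n`, every
`η ∈ V(n,Λ)` different from the all-ones configuration has a zero in `Λ \ P (n−1)`. -/
theorem stmt7 (U : Finset (Finset ℤ)) (hU : isUpdateFamily1 U)
    (hstable : ∀ X ∈ U, ¬ (∀ x ∈ X, 0 < x))
    (n : ℕ) (hn : 1 ≤ n)
    (IH : ∀ Λ : Set ℤ, Pn (range1 U) (n - 1) ⊆ Λ →
      ∀ η ∈ V1 U (n - 1) Λ, η 0 = true) :
    ∀ Λ : Set ℤ, Pn (range1 U) n ⊆ Λ →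
      ∀ η ∈ V1 U n Λ, ¬ (∀ s ∈ Λ, η s = true) →
        ∃ s ∈ Λ, s ∉ Pn (range1 U) (n - 1) ∧ η s = false := by
  classical
  intro Λ hΛ η hη hne
  by_contra hcon
  push_neg at hcon
  -- hcon : ∀ s ∈ Λ, s ∉ Pn (range1 U) (n-1) → η s ≠ false
  set r := range1 U with hrdef
  set A := aseq r (n - 1) with hAdef
  set B := bseq r (n - 1) with hBdef
  set AN := aseq r n with hANdef
  set BN := bseq r n with hBNdef
  have hEq : AN = 2 * A + (r:ℤ) := by rw [hANdef, hAdef]; exact aseq_succ r hn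
  have hA0 : (0:ℤ) ≤ A := by rw [hAdef]; exact aseq_nonneg r (n-1)
  have hBle : B ≤ BN := by rw [hBdef, hBNdef]; exact bseq_le_succ r hn
  have hPmem : ∀ s : ℤ, s ∈ Pn r (n - 1) ↔ (-A ≤ s ∧ s ≤ B) := by
    intro s
    rw [hAdef, hBdef]
    exact Set.mem_Icc
  have hPnΛ : ∀ w : ℤ, -AN ≤ w → w ≤ BN → w ∈ Λ := by
    intro w h1 h2
    apply hΛ
    rw [hANdef] at h1
    rw [hBNdef] at h2
    exact Set.mem_Icc.mpr ⟨h1, h2⟩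
  -- η has a zero in Λ
  push_neg at hne
  obtain ⟨s₀, hs₀Λ, hs₀ne⟩ := hne
  have hs₀f : η s₀ = false := by
    revert hs₀ne; cases η s₀ <;> simp
  -- the minimal zero c₁ of η in Λ
  have hSsub : {s : ℤ | s ∈ Λ ∧ η s = false} ⊆ Set.Icc (-A) B := by
    intro s hs
    have hP : s ∈ Pn r (n - 1) := by
      by_contra h
      exact hcon s hs.1 h hs.2
    exact Set.mem_Icc.mpr ((hPmem s).mp hP)
  have hfin : {s : ℤ | s ∈ Λ ∧ η s = false}.Finite :=
    Set.Finite.subset (Set.finite_Icc _ _) hSsub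
  obtain ⟨c₁, hc₁S, hcmin⟩ :=
    Set.exists_min_image {s : ℤ | s ∈ Λ ∧ η s = false} id hfin ⟨s₀, hs₀Λ, hs₀f⟩
  obtain ⟨hc₁Λ, hc₁f⟩ := hc₁S
  have hmin : ∀ w : ℤ, w ∈ Λ → η w = false → c₁ ≤ w := fun w h1 h2 => hcmin w ⟨h1, h2⟩
  have hc₁lb : -A ≤ c₁ := (Set.mem_Icc.mp (hSsub ⟨hc₁Λ, hc₁f⟩)).1
  have hc₁ub : c₁ ≤ B := (Set.mem_Icc.mp (hSsub ⟨hc₁Λ, hc₁f⟩)).2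
  -- the layer [c₁ - r, c₁ - 1] is inside Λ
  have hlayerΛ : ∀ w : ℤ, c₁ - (r:ℤ) ≤ w → w ≤ c₁ - 1 → w ∈ Λ := by
    intro w h1 h2
    exact hPnΛ w (by omega) (by omega)
  -- the path
  obtain ⟨m, p, hp0, hpm, hmv, hcnt⟩ := hη
  have hp0c : p 0 c₁ = true := by
    have := hp0 c₁ hc₁Λ
    simpa using this
  have hpmc : p m c₁ = false := by
    rw [hpm c₁ hc₁Λ]; exact hc₁f
  -- σ₁ : last time c₁ is occupied
  set σ₁ := Nat.findGreatest (fun t => p t c₁ = true) m with hσdef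
  have hσspec : p σ₁ c₁ = true := by
    rw [hσdef]
    exact Nat.findGreatest_spec (P := fun t => p t c₁ = true) (Nat.zero_le m) hp0c
  have hσle : σ₁ ≤ m := by rw [hσdef]; exact Nat.findGreatest_le m
  have hσlt : σ₁ < m := by
    rcases lt_or_eq_of_le hσle with h | h
    · exact h
    · rw [h] at hσspec; rw [hσspec] at hpmc; exact absurd hpmc (by simp)
  have hafter : ∀ t, σ₁ < t → t ≤ m → p t c₁ = false := by
    intro t h1 h2
    have h3 : ¬ (p t c₁ = true) := by
      rw [hσdef] at h1
      exact Nat.findGreatest_is_greatest (P := fun t => p t c₁ = true) h1 h2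
    revert h3; cases p t c₁ <;> simp
  -- the padded configuration and volume
  set Ω : Set ℤ := {s : ℤ | s < c₁ → s ∈ Λ} with hΩdef
  set Q : ℕ → ℤ → Bool := fun t s => if s < c₁ then p t s else true with hQdef
  have hΛtoΩ : ∀ w : ℤ, w ∈ Λ → w ∈ Ω := by
    intro w hw
    rw [hΩdef]
    exact fun _ => hw
  have hΩge : ∀ w : ℤ, ¬ w < c₁ → w ∈ Ω := by
    intro w hw
    rw [hΩdef]
    exact fun h => absurd h hw
  have hΩtoΛ : ∀ w : ℤ, w ∈ Ω → w < c₁ → w ∈ Λ := by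
    intro w hw hlt
    rw [hΩdef] at hw
    exact hw hlt
  have hQlt : ∀ (t : ℕ) (s : ℤ), s < c₁ → Q t s = p t s := by
    intro t s h
    rw [hQdef]
    exact if_pos h
  have hQge : ∀ (t : ℕ) (s : ℤ), ¬ s < c₁ → Q t s = true := by
    intro t s h
    rw [hQdef]
    exact if_neg h
  have hext : ∀ (t : ℕ) (w : ℤ), w < c₁ → extCfg1 Ω (Q t) w = extCfg1 Λ (p t) w := by
    intro t w hw
    by_cases hwΛ : w ∈ Λ
    · rw [extCfg1_pos (hΛtoΩ w hwΛ), extCfg1_pos hwΛ, hQlt t w hw]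
    · rw [extCfg1_neg hwΛ, extCfg1_neg (fun hΩm => hwΛ (hΩtoΛ w hΩm hw))]
  -- KEY: given a protected zero at a good time, derive a contradiction via IH
  have key : ∀ (tS : ℕ) (y : ℤ), σ₁ + 1 ≤ tS → tS ≤ m → c₁ - (r:ℤ) ≤ y → y ≤ c₁ - 1 →
      p tS y = false →
      (∀ t, tS ≤ t → t < m → legalMove1 U Ω (Q t) (Q (t + 1))) → False := by
    intro tS y htS1 htS2 hylb hyub hpy hgood
    have hPsub : Pn r (n - 1) ⊆ {s : ℤ | s + y ∈ Ω} := by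
      intro s hs
      have hs' := (hPmem s).mp hs
      show s + y ∈ Ω
      rw [hΩdef]
      intro hlt
      exact hPnΛ _ (by omega) (by omega)
    have hmem : (fun s => Q tS (s + y)) ∈ V1 U (n - 1) {s : ℤ | s + y ∈ Ω} := by
      refine ⟨m - tS, fun j s => Q (m - j) (s + y), ?_, ?_, ?_, ?_⟩
      · -- start: all ones
        intro s hs
        show Q (m - 0) (s + y) = true
        rw [Nat.sub_zero]
        by_cases hlt : s + y < c₁
        · have hmemΛ : s + y ∈ Λ := hΩtoΛ _ hs hlt
          rw [hQlt m _ hlt, hpm _ hmemΛ]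
          rcases Bool.eq_false_or_eq_true (η (s + y)) with ht | hf
          · exact ht
          · exact absurd (hmin _ hmemΛ hf) (by omega)
        · exact hQge m _ hlt
      · -- end
        intro s hs
        show Q (m - (m - tS)) (s + y) = Q tS (s + y)
        rw [Nat.sub_sub_self htS2]
      · -- moves
        intro j hj
        have e1 : m - j = (m - j - 1) + 1 := by omega
        have e2 : m - (j + 1) = m - j - 1 := by omega
        have ht1 : tS ≤ m - j - 1 := by omega
        have ht2 : m - j - 1 < m := by omega
        have h1 := hgood (m - j - 1) ht1 ht2
        have h2 := legalMove1_symm hU h1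
        have h3 := legalMove1_translate y h2
        show legalMove1 U {s : ℤ | s + y ∈ Ω}
          (fun s => Q (m - j) (s + y)) (fun s => Q (m - (j + 1)) (s + y))
        rw [e2, e1]
        exact h3
      · -- counts
        intro j hj
        have h1 : σ₁ < m - j := by omega
        have h2 : m - j ≤ m := by omega
        have hA2 := hcnt (m - j) h2
        have hc₁mem : c₁ ∈ {s : ℤ | s ∈ Λ ∧ p (m - j) s = false} :=
          ⟨hc₁Λ, hafter _ h1 h2⟩
        have himg : {s : ℤ | s ∈ {s : ℤ | s + y ∈ Ω} ∧ Q (m - j) (s + y) = false}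
            = (fun w : ℤ => w - y) '' {w : ℤ | w ∈ Ω ∧ Q (m - j) w = false} := by
          ext s
          constructor
          · rintro ⟨hs1, hs2⟩
            exact ⟨s + y, ⟨hs1, hs2⟩, by show s + y - y = s; ring⟩
          · rintro ⟨w, ⟨hw1, hw2⟩, rfl⟩
            have e : (w - y) + y = w := by ring
            constructor
            · show (w - y) + y ∈ Ω
              rw [e]; exact hw1
            · show Q (m - j) ((w - y) + y) = false
              rw [e]; exact hw2
        have hinj : Function.Injective (fun w : ℤ => w - y) := by
          intro a b hab
          have hab' : a - y = b - y := hab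
          omega
        have hWsub : {w : ℤ | w ∈ Ω ∧ Q (m - j) w = false}
            ⊆ {s : ℤ | s ∈ Λ ∧ p (m - j) s = false} \ {c₁} := by
          rintro w ⟨hw1, hw2⟩
          have hwlt : w < c₁ := by
            by_contra hge
            rw [hQge _ _ hge] at hw2
            exact absurd hw2 (by simp)
          refine ⟨⟨hΩtoΛ _ hw1 hwlt, ?_⟩, ?_⟩
          · rw [← hQlt (m - j) w hwlt]; exact hw2
          · simp only [Set.mem_singleton_iff]
            omega
        have hnotmem : c₁ ∉ {s : ℤ | s ∈ Λ ∧ p (m - j) s = false} \ {c₁} := by simp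
        have hins : insert c₁ ({s : ℤ | s ∈ Λ ∧ p (m - j) s = false} \ {c₁})
            = {s : ℤ | s ∈ Λ ∧ p (m - j) s = false} := by
          rw [Set.insert_diff_singleton]
          exact Set.insert_eq_self.mpr hc₁mem
        have henc := Set.encard_insert_of_notMem hnotmem
        rw [hins] at henc
        have hle : ({s : ℤ | s ∈ Λ ∧ p (m - j) s = false} \ {c₁}).encard + 1 ≤ (n : ℕ∞) := by
          rw [← henc]; exact hA2
        have hcast : ((n:ℕ) : ℕ∞) = ((n - 1 : ℕ) : ℕ∞) + 1 := by
          have hn' : n - 1 + 1 = n := by omega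
          conv_lhs => rw [← hn']
          exact_mod_cast rfl
        rw [hcast] at hle
        have hfin2 := (WithTop.add_le_add_iff_right (by exact WithTop.one_ne_top)).mp hle
        show {s : ℤ | s ∈ {s : ℤ | s + y ∈ Ω} ∧ Q (m - j) (s + y) = false}.encard
            ≤ ((n - 1 : ℕ) : ℕ∞)
        calc {s : ℤ | s ∈ {s : ℤ | s + y ∈ Ω} ∧ Q (m - j) (s + y) = false}.encard
            = ((fun w : ℤ => w - y) '' {w : ℤ | w ∈ Ω ∧ Q (m - j) w = false}).encard := by
              rw [himg]
          _ = {w : ℤ | w ∈ Ω ∧ Q (m - j) w = false}.encard :=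
              Set.InjOn.encard_image (fun a _ b _ h => hinj h)
          _ ≤ ({s : ℤ | s ∈ Λ ∧ p (m - j) s = false} \ {c₁}).encard :=
              Set.encard_mono hWsub
          _ ≤ ((n - 1 : ℕ) : ℕ∞) := hfin2
    have hIH := IH {s : ℤ | s + y ∈ Ω} hPsub (fun s => Q tS (s + y)) hmem
    have hIH' : Q tS (0 + y) = true := hIH
    rw [zero_add, hQlt tS y (by omega), hpy] at hIH'
    exact absurd hIH' (by simp)
  -- Case analysis on the last "dangerous" step
  by_cases hS : ∃ t, t ≤ m - 1 ∧ (σ₁ + 1 ≤ t ∧ ¬ legalMove1 U Ω (Q t) (Q (t + 1)))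
  · -- there is a dangerous step; take the last one
    obtain ⟨t₁, ht₁le, hPt₁⟩ := hS
    obtain ⟨t₀, hσt₀, hD₀, ht₀le, hmax⟩ :
        ∃ t₀, σ₁ + 1 ≤ t₀ ∧ ¬ legalMove1 U Ω (Q t₀) (Q (t₀ + 1)) ∧ t₀ ≤ m - 1 ∧
          ∀ t, t₀ < t → t ≤ m - 1 →
            ¬(σ₁ + 1 ≤ t ∧ ¬ legalMove1 U Ω (Q t) (Q (t + 1))) := by
      have hspec := Nat.findGreatest_spec
        (P := fun t => σ₁ + 1 ≤ t ∧ ¬ legalMove1 U Ω (Q t) (Q (t + 1))) ht₁le hPt₁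
      refine ⟨Nat.findGreatest
        (fun t => σ₁ + 1 ≤ t ∧ ¬ legalMove1 U Ω (Q t) (Q (t + 1))) (m - 1),
        hspec.1, hspec.2, Nat.findGreatest_le _, ?_⟩
      intro t h1 h2
      exact Nat.findGreatest_is_greatest
        (P := fun t => σ₁ + 1 ≤ t ∧ ¬ legalMove1 U Ω (Q t) (Q (t + 1))) h1 h2
    have ht₀m : t₀ < m := by omega
    have hgood : ∀ t, t₀ + 1 ≤ t → t < m → legalMove1 U Ω (Q t) (Q (t + 1)) := by
      intro t h1 h2
      by_contra hD
      exact hmax t (by omega) (by omega) ⟨by omega, hD⟩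
    -- Step 1 : the p-move at t₀ changes something strictly below c₁
    have hbc : ∃ s, s ∈ Λ ∧ s < c₁ ∧ ¬ p (t₀ + 1) s = p t₀ s := by
      by_contra hnb
      push_neg at hnb
      apply hD₀
      refine Or.inl (fun s hsΩ => ?_)
      by_cases hlt : s < c₁
      · rw [hQlt (t₀ + 1) s hlt, hQlt t₀ s hlt]
        exact hnb s (hΩtoΛ s hsΩ hlt) hlt
      · rw [hQge (t₀ + 1) s hlt, hQge t₀ s hlt]
    obtain ⟨sx, hsxΛ, hsxlt, hsxne⟩ := hbc
    -- Step 2 : analyse the p-move at t₀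
    rcases hmv t₀ ht₀m with hfd | ⟨z, hzΛ, hzf, hzp, X₁, hX₁U, hX₁c⟩
    · exact absurd (hfd sx hsxΛ) hsxne
    -- Step 3 : the flipped site is sx, strictly below c₁
    have hzs : z = sx := by
      by_contra hzz
      exact hsxne (hzp sx hsxΛ (fun h => hzz h.symm))
    have hzlt : z < c₁ := by rw [hzs]; exact hsxlt
    -- Step 4 : the constraint fails in the padded world
    have hzΩ : z ∈ Ω := hΛtoΩ z hzΛ
    have hQflip : Q (t₀ + 1) z = !(Q t₀ z) := by
      rw [hQlt _ _ hzlt, hQlt _ _ hzlt]; exact hzf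
    have hQpres : ∀ s ∈ Ω, s ≠ z → Q (t₀ + 1) s = Q t₀ s := by
      intro s hsΩ hsz
      by_cases hlt : s < c₁
      · rw [hQlt _ _ hlt, hQlt _ _ hlt]
        exact hzp s (hΩtoΛ s hsΩ hlt) hsz
      · rw [hQge _ _ hlt, hQge _ _ hlt]
    have hx : ∃ x ∈ X₁, ¬ extCfg1 Ω (Q t₀) (z + x) = false := by
      by_contra hall
      push_neg at hall
      exact hD₀ (Or.inr ⟨z, hzΩ, hQflip, hQpres, X₁, hX₁U, hall⟩)
    obtain ⟨xp, hxpX, hxp⟩ := hx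
    -- Step 5 : the failing site lies at or above c₁, so xp is positive
    have hge : c₁ ≤ z + xp := by
      by_contra hlt'
      push_neg at hlt'
      apply hxp
      rw [hext t₀ (z + xp) hlt']
      exact hX₁c xp hxpX
    -- Step 6 : the rule has a negative element, giving a protected zero below c₁
    have hstX := hstable X₁ hX₁U
    push_neg at hstX
    obtain ⟨xm, hxmX, hxmle⟩ := hstX
    have hxmne : xm ≠ 0 := fun h => (hU X₁ hX₁U).2 (h ▸ hxmX)
    have hdiam : (xp - xm).natAbs ≤ r := by
      rw [hrdef]
      exact natAbs_sub_le_range1 hX₁U (Finset.mem_insert_of_mem hxpX)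
        (Finset.mem_insert_of_mem hxmX)
    have hylb : c₁ - (r:ℤ) ≤ z + xm := by omega
    have hyub : z + xm ≤ c₁ - 1 := by omega
    have hyΛ : z + xm ∈ Λ := hlayerΛ _ hylb hyub
    have hp1 : p t₀ (z + xm) = false := by
      have := hX₁c xm hxmX
      rwa [extCfg1_pos hyΛ] at this
    have hp2 : p (t₀ + 1) (z + xm) = false := by
      rw [hzp _ hyΛ (by omega)]
      exact hp1
    exact key (t₀ + 1) (z + xm) (by omega) (by omega) hylb hyub hp2 hgood
  · -- no dangerous step : use the flip witness at σ₁
    have hgood : ∀ t, σ₁ + 1 ≤ t → t < m → legalMove1 U Ω (Q t) (Q (t + 1)) := by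
      intro t h1 h2
      by_contra hD
      exact hS ⟨t, by omega, h1, hD⟩
    -- the move at σ₁ flips c₁
    have hp1c : p (σ₁ + 1) c₁ = false := hafter (σ₁ + 1) (by omega) (by omega)
    rcases hmv σ₁ hσlt with hfd | ⟨z, hzΛ, hzf, hzp, X₀, hX₀U, hX₀c⟩
    · rw [hfd c₁ hc₁Λ, hσspec] at hp1c
      exact absurd hp1c (by simp)
    have hzc : z = c₁ := by
      by_contra hzz
      rw [hzp c₁ hc₁Λ (fun h => hzz h.symm), hσspec] at hp1c
      exact absurd hp1c (by simp)
    rw [hzc] at hzf hzp hX₀c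
    -- a negative element of the rule gives the witness
    have hstX := hstable X₀ hX₀U
    push_neg at hstX
    obtain ⟨xm, hxmX, hxmle⟩ := hstX
    have hxmne : xm ≠ 0 := fun h => (hU X₀ hX₀U).2 (h ▸ hxmX)
    have habs : xm.natAbs ≤ r := by
      rw [hrdef]; exact natAbs_le_range1 hX₀U hxmX
    have hylb : c₁ - (r:ℤ) ≤ c₁ + xm := by omega
    have hyub : c₁ + xm ≤ c₁ - 1 := by omega
    have hyΛ : c₁ + xm ∈ Λ := hlayerΛ _ hylb hyub
    have hp1 : p σ₁ (c₁ + xm) = false := by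
      have := hX₀c xm hxmX
      rwa [extCfg1_pos hyΛ] at this
    have hp2 : p (σ₁ + 1) (c₁ + xm) = false := by
      rw [hzp _ hyΛ (by omega)]
      exact hp1
    exact key (σ₁ + 1) (c₁ + xm) le_rfl (by omega) hylb hyub hp2 hgood
end

section
/- Induction step in dimension 1: assume H_{n−1} (for every Λ ⊇ P_{n−1} and every η ∈ V(n−1,Λ), η_0 = 1) and the key lemma (for every Λ ⊇ P_n and η ∈ V(n,Λ)\{1_Λ}, η has a zero in Λ\P_{n−1}). Then H_n holds: for every Λ ⊇ P_n and every η ∈ V(n,Λ), η_0 = 1. The proof restricts an n-legal path in Λ to P_{n−1} and shows the restriction is an (n−1)-legal path. -/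
lemma extCfg1_mono {Λ Λ' : Set ℤ} (h : Λ' ⊆ Λ) (η : ℤ → Bool) (s : ℤ)
    (hf : extCfg1 Λ η s = false) : extCfg1 Λ' η s = false := by
  by_cases h1 : s ∈ Λ'
  · have h2 : s ∈ Λ := h h1
    simp only [extCfg1, if_pos h1, if_pos h2] at *
    exact hf
  · simp [extCfg1, h1]

lemma Pn_mono (r n : ℕ) (hn : 1 ≤ n) : Pn r (n - 1) ⊆ Pn r n := by
  have h1 : aseq r (n-1) ≤ aseq r n := by
    unfold aseq
    have : (2:ℤ)^(n-1) ≤ 2^n := pow_le_pow_right₀ (by norm_num) (Nat.sub_le n 1)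
    nlinarith [Int.ofNat_nonneg r]
  have h2 : bseq r (n-1) ≤ bseq r n := by
    unfold bseq
    have hc : ((n-1 : ℕ) : ℤ) ≤ (n : ℤ) := by exact_mod_cast Nat.sub_le n 1
    have hp : (2:ℤ)^(n-1-1) ≤ 2^(n-1) := pow_le_pow_right₀ (by norm_num) (Nat.sub_le _ 1)
    have h2p : (0:ℤ) ≤ 2^(n-1-1) := by positivity
    have hn0 : (0:ℤ) ≤ ((n-1 : ℕ) : ℤ) := Int.ofNat_nonneg _
    have hr : (0:ℤ) ≤ (r:ℤ) := Int.ofNat_nonneg _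
    exact mul_le_mul (mul_le_mul_of_nonneg_left hc hr) hp h2p (by positivity)
  exact Set.Icc_subset_Icc (neg_le_neg h1) h2

lemma zero_mem_Pn (r n : ℕ) : (0 : ℤ) ∈ Pn r n := by
  constructor
  · have : (1:ℤ) ≤ 2^n := by exact_mod_cast Nat.one_le_two_pow
    have : (0:ℤ) ≤ aseq r n := by unfold aseq; nlinarith [Int.ofNat_nonneg r]
    linarith
  · unfold bseq; positivity

/-- Induction step in dimension 1: `H (n−1)` together with the key lemma implies `H n`. -/
theorem stmt8 (U : Finset (Finset ℤ)) (hU : isUpdateFamily1 U)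
    (hstable : ∀ X ∈ U, ¬ (∀ x ∈ X, 0 < x))
    (n : ℕ) (hn : 1 ≤ n)
    (IH : ∀ Λ : Set ℤ, Pn (range1 U) (n - 1) ⊆ Λ →
      ∀ η ∈ V1 U (n - 1) Λ, η 0 = true)
    (key : ∀ Λ : Set ℤ, Pn (range1 U) n ⊆ Λ →
      ∀ η ∈ V1 U n Λ, ¬ (∀ s ∈ Λ, η s = true) →
        ∃ s ∈ Λ, s ∉ Pn (range1 U) (n - 1) ∧ η s = false) :
    ∀ Λ : Set ℤ, Pn (range1 U) n ⊆ Λ → ∀ η ∈ V1 U n Λ, η 0 = true := by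
  intro Λ hΛ η hη
  obtain ⟨m, p, h0, hm, hstep, hcard⟩ := hη
  set r := range1 U with hr
  have hsub : Pn r (n-1) ⊆ Pn r n := Pn_mono r n hn
  have hsubΛ : Pn r (n-1) ⊆ Λ := hsub.trans hΛ
  -- each p j is in V1 U n Λ
  have hVj : ∀ j ≤ m, p j ∈ V1 U n Λ := by
    intro j hj
    exact ⟨j, p, h0, fun s _ => rfl, fun k hk => hstep k (lt_of_lt_of_le hk hj),
      fun k hk => hcard k (hk.trans hj)⟩
  -- zero count bound in restricted domain
  have hcard' : ∀ j ≤ m, {s ∈ Pn r (n-1) | p j s = false}.encard ≤ ((n-1 : ℕ) : ℕ∞) := by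
    intro j hj
    by_cases hall : ∀ s ∈ Λ, p j s = true
    · have he : {s ∈ Pn r (n-1) | p j s = false} = ∅ := by
        ext s
        simp only [Set.mem_setOf_eq, Set.mem_empty_iff_false, iff_false, not_and]
        intro hs hf
        have := hall s (hsubΛ hs)
        simp [this] at hf
      simp [he]
    · obtain ⟨s0, hs0Λ, hs0P, hs0f⟩ := key Λ hΛ (p j) (hVj j hj) hall
      have hs0A : s0 ∈ {s ∈ Λ | p j s = false} := ⟨hs0Λ, hs0f⟩
      have hBsub : {s ∈ Pn r (n-1) | p j s = false} ⊆ {s ∈ Λ | p j s = false} \ {s0} := by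
        rintro s ⟨hs, hf⟩
        refine ⟨⟨hsubΛ hs, hf⟩, ?_⟩
        simp only [Set.mem_singleton_iff]
        rintro rfl
        exact hs0P hs
      calc {s ∈ Pn r (n-1) | p j s = false}.encard
          ≤ ({s ∈ Λ | p j s = false} \ {s0}).encard := Set.encard_le_encard hBsub
        _ = {s ∈ Λ | p j s = false}.encard - 1 :=
            Set.encard_diff_singleton_of_mem hs0A
        _ ≤ (n : ℕ∞) - 1 := tsub_le_tsub_right (hcard j hj) 1
        _ = ((n-1 : ℕ) : ℕ∞) := by simp [ENat.coe_sub]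
  -- the restricted path
  have hmem : p m ∈ V1 U (n-1) (Pn r (n-1)) := by
    refine ⟨m, p, fun s hs => h0 s (hsubΛ hs), fun s _ => rfl, ?_, hcard'⟩
    intro j hj
    rcases hstep j hj with h | ⟨z, hzΛ, hflip, hrest, X, hX, hzero⟩
    · exact Or.inl fun s hs => h s (hsubΛ hs)
    · by_cases hz : z ∈ Pn r (n-1)
      · exact Or.inr ⟨z, hz, hflip, fun s hs hne => hrest s (hsubΛ hs) hne,
          X, hX, fun x hx => extCfg1_mono hsubΛ _ _ (hzero x hx)⟩
      · refine Or.inl fun s hs => hrest s (hsubΛ hs) ?_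
        rintro rfl
        exact hz hs
  have h0P := IH (Pn r (n-1)) (subset_refl _) (p m) hmem
  have h0Λ : (0:ℤ) ∈ Λ := hΛ (zero_mem_Pn r n)
  rw [← hm 0 h0Λ, h0P]
end

section
/- Geometric separation by the buffer: with r the range of 𝒰 and the sets B, C, D defined as in the one-dimensional lemma (B a buffer of width r on each side of D, C the rest of Λ), if z ∈ B and X ∈ 𝒰 satisfies (z+X) ∩ B = ∅ and z+X ⊂ C ∪ Λ^c ∪ D, then z+X ⊂ C ∪ Λ^c or z+X ⊂ D. That is, a translated update rule avoiding the buffer cannot intersect both sides of it. -/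
lemma aseq_step (r n : ℕ) (hr : 1 ≤ r) (hn : 1 ≤ n) :
    aseq r (n-1) + (r:ℤ) ≤ aseq r n := by
  obtain ⟨m, rfl⟩ : ∃ m, n = m + 1 := ⟨n - 1, by omega⟩
  simp only [aseq, Nat.add_sub_cancel]
  have h1 : (1:ℤ) ≤ 2 ^ m := one_le_pow₀ (by norm_num)
  have hr' : (1:ℤ) ≤ (r:ℤ) := by exact_mod_cast hr
  have : (2:ℤ) ^ (m+1) = 2 * 2 ^ m := by ring
  nlinarith [mul_le_mul_of_nonneg_left h1 (by linarith : (0:ℤ) ≤ (r:ℤ))]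

lemma bseq_step (r n : ℕ) (hr : 1 ≤ r) (hn : 1 ≤ n) :
    bseq r (n-1) + (r:ℤ) ≤ bseq r n := by
  obtain ⟨m, rfl⟩ : ∃ m, n = m + 1 := ⟨n - 1, by omega⟩
  have hr' : (1:ℤ) ≤ (r:ℤ) := by exact_mod_cast hr
  rcases Nat.eq_zero_or_pos m with rfl | hm
  · simp [bseq]
  · obtain ⟨k, rfl⟩ : ∃ k, m = k + 1 := ⟨m - 1, by omega⟩
    simp only [bseq, Nat.add_sub_cancel]
    have h1 : (1:ℤ) ≤ 2 ^ k := one_le_pow₀ (by norm_num)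
    have h2 : (2:ℤ) ^ (k+1) = 2 * 2 ^ k := by ring
    push_cast
    have ht : (r:ℤ) ≤ (r:ℤ) * 2 ^ k := by nlinarith
    have htc : (0:ℤ) ≤ (k:ℤ) * ((r:ℤ) * 2 ^ k) := by positivity
    nlinarith [ht, htc]

/-- Geometric separation by the buffer: a translated update rule avoiding the buffer `B`
cannot intersect both `C ∪ Λᶜ` and `D`. -/
theorem stmt15 (U : Finset (Finset ℤ)) (hU : isUpdateFamily1 U)
    (r : ℕ) (hr : 1 ≤ r) (n : ℕ) (hn : 1 ≤ n)
    (hrange : ∀ X ∈ U, ∀ x ∈ insert (0:ℤ) X, ∀ y ∈ insert (0:ℤ) X,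
      (x - y).natAbs ≤ r)
    (Λ : Set ℤ) (hΛ : Pn r n ⊆ Λ)
    (B D C : Set ℤ)
    (hB : B = Set.Icc (-(aseq r n) + aseq r (n-1)) (-(aseq r n) + aseq r (n-1) + (r:ℤ) - 1) ∪
      Set.Icc (bseq r n - (bseq r (n-1) + (r:ℤ)) + 1) (bseq r n - bseq r (n-1)))
    (hD : D = Set.Icc (-(aseq r n) + aseq r (n-1) + (r:ℤ)) (bseq r n - (bseq r (n-1) + (r:ℤ))))
    (hC : C = Λ \ (B ∪ D))
    (z : ℤ) (hz : z ∈ B) (X : Finset ℤ) (hX : X ∈ U)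
    (havoid : ∀ x ∈ X, z + x ∉ B)
    (hsub : ∀ x ∈ X, z + x ∈ C ∪ Λᶜ ∪ D) :
    (∀ x ∈ X, z + x ∈ C ∪ Λᶜ) ∨ (∀ x ∈ X, z + x ∈ D) := by
  have ha : aseq r (n-1) + (r:ℤ) ≤ aseq r n := aseq_step r n hr hn
  have hb : bseq r (n-1) + (r:ℤ) ≤ bseq r n := bseq_step r n hr hn
  by_cases hall : ∀ x ∈ X, z + x ∉ D
  · left
    intro x hx
    rcases hsub x hx with h | h
    · exact h
    · exact absurd h (hall x hx)
  · right
    push_neg at hall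
    obtain ⟨x1, hx1X, hx1D⟩ := hall
    intro x2 hx2X
    by_contra hx2D
    have hB2 := havoid x2 hx2X
    have h1 := hrange X hX x1 (Finset.mem_insert_of_mem hx1X) x2 (Finset.mem_insert_of_mem hx2X)
    have h2 := hrange X hX x2 (Finset.mem_insert_of_mem hx2X) 0 (Finset.mem_insert_self _ _)
    have h3 := hrange X hX x1 (Finset.mem_insert_of_mem hx1X) 0 (Finset.mem_insert_self _ _)
    subst hB hD
    simp only [Set.mem_union, Set.mem_Icc, not_or, not_and, not_le] at hz hB2 hx1D hx2D
    omega
end
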